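/- arXiv:1910.07906 — 8 statements merged into one kernel-verified Lean document; each statement's English description precedes it below -/
import Mathlib

section
/- Let G be a group, (V,+) an abelian group, and φ: G×G → V satisfying φ(1,x) = 0 = φ(x,1), φ(x,x⁻¹) = 0, and φ(x'⁻¹x⁻¹, x) = φ(x,x') for all x,x' ∈ G. Define J on G×V by J(x,v) = (x⁻¹,-v). Then the loop G×_φ V, with multiplication (x,v)(x',v') = (xx', φ(x,x')+v+v'), is an m-inverse loop with permutation J for every odd integer m; that is, J^m((x,v)(x',v'))·J^{m+1}(x,v) = J^m(x',v') for all (x,v),(x',v'). -/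
theorem stmt_4 {G V : Type*} [Group G] [AddCommGroup V]
    (φ : G → G → V)
    (h0 : ∀ x : G, φ 1 x = 0 ∧ φ x 1 = 0)
    (h1 : ∀ x : G, φ x x⁻¹ = 0)
    (h2 : ∀ x x' : G, φ (x'⁻¹ * x⁻¹) x = φ x x')
    (J : Equiv.Perm (G × V))
    (hJ : ∀ p : G × V, J p = (p.1⁻¹, -p.2)) :
    let mul : G × V → G × V → G × V :=
      fun p q => (p.1 * q.1, φ p.1 q.1 + p.2 + q.2)
    ∀ m : ℤ, Odd m → ∀ p q : G × V,
      mul ((J ^ m) (mul p q)) ((J ^ (m + 1)) p) = (J ^ m) q := by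
  intro mul m hm p q
  have hJ2 : J ^ (2 : ℤ) = 1 := by
    rw [zpow_two]
    ext p : 1
    simp [hJ]
  obtain ⟨k, hk⟩ := hm
  have hodd : J ^ m = J := by
    rw [hk, zpow_add, zpow_one, zpow_mul, hJ2, one_zpow, one_mul]
  have heven : J ^ (m + 1) = 1 := by
    rw [zpow_add, hodd, zpow_one, ← zpow_two, hJ2]
  rw [hodd, heven]
  obtain ⟨x, v⟩ := p
  obtain ⟨x', v'⟩ := q
  simp only [mul, hJ, Equiv.Perm.coe_one, id_eq]
  simp only [Prod.mk.injEq]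
  constructor
  · group
  · rw [show (x * x')⁻¹ = x'⁻¹ * x⁻¹ by group, h2]
    abel
end

section
/- If Q is an (r,s,t)-inverse quasigroup with permutation J: Q → Q such that J^h is a quasigroup automorphism of Q, then Q is an (r+uh, s+uh, t+uh)-inverse quasigroup for every integer u. -/
theorem Equiv.Perm.zpow_map_mul {M : Type*} [Mul M] (f : Equiv.Perm M)
    (hf : ∀ x y : M, f (x * y) = f x * f y) (n : ℤ) (x y : M) :
    (f ^ n) (x * y) = (f ^ n) x * (f ^ n) y := by
  let σ : MulAut M := { f with map_mul' := hf }
  have hσ : f ^ n = MulAut.toPerm M (σ ^ n) := by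
    rw [map_zpow]
    rfl
  rw [hσ]
  exact map_mul (σ ^ n) x y

theorem inverseProperty_add_of_map_mul {Q : Type*} [Mul Q] (J : Equiv.Perm Q) (r s t k : ℤ)
    (hrst : ∀ x y : Q, (J ^ r) (x * y) * (J ^ s) x = (J ^ t) y)
    (hk : ∀ x y : Q, (J ^ k) (x * y) = (J ^ k) x * (J ^ k) y) (x y : Q) :
    (J ^ (r + k)) (x * y) * (J ^ (s + k)) x = (J ^ (t + k)) y := by
  simp only [add_comm _ k, zpow_add, Equiv.Perm.mul_apply, ← hk, hrst]

theorem stmt_6_general {Q : Type*} [Mul Q]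
    (J : Equiv.Perm Q) (r s t h : ℤ)
    (hrst : ∀ x y : Q, (J ^ r) (x * y) * (J ^ s) x = (J ^ t) y)
    (haut : ∀ x y : Q, (J ^ h) (x * y) = (J ^ h) x * (J ^ h) y) :
    ∀ u : ℤ, ∀ x y : Q,
      (J ^ (r + u * h)) (x * y) * (J ^ (s + u * h)) x = (J ^ (t + u * h)) y := by
  intro u
  refine inverseProperty_add_of_map_mul J r s t (u * h) hrst fun x y => ?_
  rw [mul_comm, zpow_mul]
  exact (J ^ h).zpow_map_mul haut u x y

theorem stmt_6 {Q : Type*} [Mul Q]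
    (hq₁ : ∀ a b : Q, ∃! x : Q, a * x = b)
    (hq₂ : ∀ a b : Q, ∃! y : Q, y * a = b)
    (J : Equiv.Perm Q) (r s t h : ℤ)
    (hrst : ∀ x y : Q, (J ^ r) (x * y) * (J ^ s) x = (J ^ t) y)
    (haut : ∀ x y : Q, (J ^ h) (x * y) = (J ^ h) x * (J ^ h) y) :
    ∀ u : ℤ, ∀ x y : Q,
      (J ^ (r + u * h)) (x * y) * (J ^ (s + u * h)) x = (J ^ (t + u * h)) y :=
  stmt_6_general J r s t h hrst haut
end

section
/- Let Q₁ be an m₁-inverse quasigroup with permutation J₁ such that J₁^{h₁} ∈ Aut(Q₁), and Q₂ an m₂-inverse quasigroup with permutation J₂ such that J₂^{h₂} ∈ Aut(Q₂). If m ∈ ℤ satisfies m ≡ m₁ (mod h₁) and m ≡ m₂ (mod h₂), then the direct product Q₁ × Q₂ (with componentwise multiplication) is an m-inverse quasigroup with permutation J₁ × J₂. -/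
/-!
If `J ^ h` is an automorphism then so is every `J ^ (h * k)`, and applying the automorphism
`J ^ (h * k)` to the `m`-inverse identity yields the `(m + h * k)`-inverse identity. Hence the
`m`-inverse property of `J` depends only on `m` modulo `h`, and `m` is an admissible exponent for
both factors; the identity on `Q₁ × Q₂` holds componentwise since `(J₁ × J₂) ^ m = J₁ ^ m × J₂ ^ m`.
-/

namespace Equiv.Perm

def IsMInverse {Q : Type*} [Mul Q] (J : Perm Q) (m : ℤ) : Prop :=
  ∀ x y : Q, (J ^ m) (x * y) * (J ^ (m + 1)) x = (J ^ m) y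

def IsMulAut {Q : Type*} [Mul Q] (J : Perm Q) : Prop :=
  ∀ x y : Q, J (x * y) = J x * J y

section

variable {Q : Type*} [Mul Q] {J : Perm Q}

theorem IsMulAut.zpow (hJ : J.IsMulAut) (k : ℤ) : (J ^ k).IsMulAut := by
  let φ : MulAut Q := { J with map_mul' := hJ }
  have hφ : MulAut.toPerm Q (φ ^ k) = J ^ k := map_zpow (MulAut.toPerm Q) φ k
  intro x y
  rw [← hφ]
  exact map_mul (φ ^ k) x y

theorem IsMInverse.add_of_isMulAut {m n : ℤ} (hm : J.IsMInverse m) (hn : (J ^ n).IsMulAut) :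
    J.IsMInverse (m + n) := by
  intro x y
  have := congrArg (J ^ n) (hm x y)
  rw [hn] at this
  simp only [← Perm.mul_apply, ← zpow_add] at this
  rwa [add_comm n m, show n + (m + 1) = m + n + 1 by ring] at this

theorem IsMInverse.of_modEq {m₀ h m : ℤ} (hm₀ : J.IsMInverse m₀) (hh : (J ^ h).IsMulAut)
    (hmod : m ≡ m₀ [ZMOD h]) : J.IsMInverse m := by
  obtain ⟨k, hk⟩ := hmod.symm.dvd
  have hm : m = m₀ + h * k := by linarith
  rw [hm]
  exact hm₀.add_of_isMulAut (by simpa only [zpow_mul] using hh.zpow k)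

end

def prodCongrHom (α β : Type*) : Perm α × Perm β →* Perm (α × β) where
  toFun e := e.1.prodCongr e.2
  map_one' := rfl
  map_mul' _ _ := rfl

theorem prodCongr_zpow {α β : Type*} (e₁ : Perm α) (e₂ : Perm β) (k : ℤ) :
    e₁.prodCongr e₂ ^ k = (e₁ ^ k).prodCongr (e₂ ^ k) :=
  (map_zpow (prodCongrHom α β) (e₁, e₂) k).symm

theorem IsMInverse.prodCongr {Q₁ Q₂ : Type*} [Mul Q₁] [Mul Q₂] {J₁ : Perm Q₁} {J₂ : Perm Q₂}
    {m : ℤ} (h₁ : J₁.IsMInverse m) (h₂ : J₂.IsMInverse m) :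
    IsMInverse (J₁.prodCongr J₂) m := by
  intro p q
  rw [prodCongr_zpow, prodCongr_zpow]
  exact Prod.ext (h₁ p.1 q.1) (h₂ p.2 q.2)

end Equiv.Perm

theorem stmt_7_general {Q₁ Q₂ : Type*} [Mul Q₁] [Mul Q₂]
    (J₁ : Equiv.Perm Q₁) (J₂ : Equiv.Perm Q₂) (m₁ m₂ h₁ h₂ m : ℤ)
    (hi₁ : ∀ x y : Q₁, (J₁ ^ m₁) (x * y) * (J₁ ^ (m₁ + 1)) x = (J₁ ^ m₁) y)
    (hi₂ : ∀ x y : Q₂, (J₂ ^ m₂) (x * y) * (J₂ ^ (m₂ + 1)) x = (J₂ ^ m₂) y)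
    (ha₁ : ∀ x y : Q₁, (J₁ ^ h₁) (x * y) = (J₁ ^ h₁) x * (J₁ ^ h₁) y)
    (ha₂ : ∀ x y : Q₂, (J₂ ^ h₂) (x * y) = (J₂ ^ h₂) x * (J₂ ^ h₂) y)
    (hc₁ : m ≡ m₁ [ZMOD h₁]) (hc₂ : m ≡ m₂ [ZMOD h₂]) :
    ∀ p q : Q₁ × Q₂,
      ((J₁.prodCongr J₂) ^ m) (p * q) * ((J₁.prodCongr J₂) ^ (m + 1)) p =
        ((J₁.prodCongr J₂) ^ m) q :=
  Equiv.Perm.IsMInverse.prodCongr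
    (Equiv.Perm.IsMInverse.of_modEq hi₁ ha₁ hc₁) (Equiv.Perm.IsMInverse.of_modEq hi₂ ha₂ hc₂)

theorem stmt_7 {Q₁ Q₂ : Type*} [Mul Q₁] [Mul Q₂]
    (hq₁₁ : ∀ a b : Q₁, ∃! x : Q₁, a * x = b)
    (hq₁₂ : ∀ a b : Q₁, ∃! y : Q₁, y * a = b)
    (hq₂₁ : ∀ a b : Q₂, ∃! x : Q₂, a * x = b)
    (hq₂₂ : ∀ a b : Q₂, ∃! y : Q₂, y * a = b)
    (J₁ : Equiv.Perm Q₁) (J₂ : Equiv.Perm Q₂) (m₁ m₂ h₁ h₂ m : ℤ)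
    (hi₁ : ∀ x y : Q₁, (J₁ ^ m₁) (x * y) * (J₁ ^ (m₁ + 1)) x = (J₁ ^ m₁) y)
    (hi₂ : ∀ x y : Q₂, (J₂ ^ m₂) (x * y) * (J₂ ^ (m₂ + 1)) x = (J₂ ^ m₂) y)
    (ha₁ : ∀ x y : Q₁, (J₁ ^ h₁) (x * y) = (J₁ ^ h₁) x * (J₁ ^ h₁) y)
    (ha₂ : ∀ x y : Q₂, (J₂ ^ h₂) (x * y) = (J₂ ^ h₂) x * (J₂ ^ h₂) y)
    (hc₁ : m ≡ m₁ [ZMOD h₁]) (hc₂ : m ≡ m₂ [ZMOD h₂]) :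
    ∀ p q : Q₁ × Q₂,
      ((J₁.prodCongr J₂) ^ m) (p * q) * ((J₁.prodCongr J₂) ^ (m + 1)) p =
        ((J₁.prodCongr J₂) ^ m) q :=
  stmt_7_general J₁ J₂ m₁ m₂ h₁ h₂ m hi₁ hi₂ ha₁ ha₂ hc₁ hc₂
end

section
/- In the setting of the semi-direct product loop R ⋊ S with multiplication (r,s)(r',s') = (r·φ(s,r'), ss') and permutation J(r,s) = (φ(J_S(s),J_R(r)), J_S(s)): if R ⋊ S is an m-inverse loop with m even, then φ(s,r) = r for all s ∈ S and r ∈ R (i.e., the action is trivial). -/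
/-!
Evaluating the `m`-inverse identity of `R ⋊ S` at `(δ, s), (r, δ)` shows that the first
coordinate of `J^m (φ(s, r), s)` is `J_R^m r`; evaluating it at `(r, s), (r', δ)` and using that
`φ(J_S t, ·)` is a right inverse of `φ(t, ·)` (the compatibility condition with `s' = δ`) makes
each `φ(s, ·)` multiplicative, hence commuting with `J_R`. Then `J²` acts on first coordinates
as `J_R²`, so for even `m` the first coordinate of `J^m (φ(s, r), s)` is also `J_R^m φ(s, r)`,
and injectivity of `J_R^m` gives `φ(s, r) = r`.
-/

open Equiv Function

theorem Equiv.Perm.zpow_add_one_apply {α : Type*} (σ : Perm α) (m : ℤ) (x : α) :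
    (σ ^ (m + 1)) x = σ ((σ ^ m) x) := by
  rw [add_comm, zpow_one_add, Perm.mul_apply]

theorem Function.Semiconj.perm_zpow {α β : Type*} {f : α → β} {σ : Perm α} {τ : Perm β}
    (h : Semiconj f σ τ) : ∀ k : ℤ, Semiconj f ⇑(σ ^ k) ⇑(τ ^ k)
  | (n : ℕ) => by simpa only [zpow_natCast, Perm.coe_pow] using h.iterate_right n
  | .negSucc n => by
    have hn : Semiconj f ⇑(σ ^ (n + 1)) ⇑(τ ^ (n + 1)) := by
      simpa only [Perm.coe_pow] using h.iterate_right (n + 1)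
    rw [zpow_negSucc, zpow_negSucc]
    exact hn.inverses_right (Equiv.apply_symm_apply _) (Equiv.symm_apply_apply _)

def HasMInverseProperty {α : Type*} (mul : α → α → α) (J : Perm α) (m : ℤ) : Prop :=
  ∀ x y, mul ((J ^ m) (mul x y)) ((J ^ (m + 1)) x) = (J ^ m) y

theorem map_mul_of_hasMInverseProperty {R : Type*} [Mul R] [IsRightCancelMul R] {JR : Perm R}
    {m : ℤ} (hR : HasMInverseProperty (· * ·) JR m) {f ψ : R → R} (hf : Surjective f)
    (hψf : ∀ r, ψ (f r) = (JR ^ m) r) (hψ : ∀ r r', ψ (r * f r') * JR (ψ r) = (JR ^ m) r')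
    (a b : R) : f (a * b) = f a * f b := by
  obtain ⟨c, hc⟩ := hf (f a * f b)
  have hc' : (JR ^ m) c * JR ((JR ^ m) a) = (JR ^ m) b := by
    rw [← hψf, ← hψf, hc, hψ]
  have hab : (JR ^ m) (a * b) * JR ((JR ^ m) a) = (JR ^ m) b := by
    rw [← Perm.zpow_add_one_apply]
    exact hR a b
  rw [← (JR ^ m).injective (mul_right_cancel (hc'.trans hab.symm)), hc]

theorem map_JR_of_map_mul {R : Type*} [Mul R] [IsLeftCancelMul R] {δR : R} {JR : Perm R}
    (hinv : ∀ r, r * JR r = δR) {f : R → R} (hf : ∀ a b, f (a * b) = f a * f b)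
    (hfδ : f δR = δR) (x : R) : f (JR x) = JR (f x) :=
  mul_left_cancel (a := f x) (by rw [← hf, hinv, hfδ, hinv])

section SemidirectProduct

variable {R S : Type*} {δR : R} {δS : S} {JR : Perm R} {JS : Perm S}
  {J : Perm (R × S)} {φ : S → R → R} {m : ℤ}

theorem zpow_apply_snd_of_semidirect (hJ : ∀ p : R × S, J p = (φ (JS p.2) (JR p.1), JS p.2))
    (k : ℤ) (p : R × S) : ((J ^ k) p).2 = (JS ^ k) p.2 :=
  Semiconj.perm_zpow (f := Prod.snd) (fun p => congrArg Prod.snd (hJ p)) k p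

theorem zpow_apply_mk_right_unit (hJ : ∀ p : R × S, J p = (φ (JS p.2) (JR p.1), JS p.2))
    (hJSδ : JS δS = δS) (hφδ : ∀ r, φ δS r = r) (k : ℤ) (r : R) :
    (J ^ k) (r, δS) = ((JR ^ k) r, δS) :=
  (Semiconj.perm_zpow (f := fun r => (r, δS)) (fun r => by simp only [hJ, hJSδ, hφδ]) k r).symm

theorem zpow_apply_mk_left_unit (hJ : ∀ p : R × S, J p = (φ (JS p.2) (JR p.1), JS p.2))
    (hJRδ : JR δR = δR) (hφδ' : ∀ s, φ s δR = δR) (k : ℤ) (s : S) :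
    (J ^ k) (δR, s) = (δR, (JS ^ k) s) :=
  (Semiconj.perm_zpow (f := fun s => (δR, s)) (fun s => by simp only [hJ, hJRδ, hφδ']) k s).symm

theorem rightInverse_action_JS (hφJS : ∀ t, LeftInverse (φ t) (φ (JS t))) (t : S) :
    RightInverse (φ t) (φ (JS t)) := by
  have hinj : Injective (φ (JS (JS.symm t))) := (hφJS (JS.symm t)).injective
  rw [JS.apply_symm_apply] at hinj
  exact (hφJS t).rightInverse_of_injective hinj

theorem semiconj_fst_sq_of_semidirect (hJ : ∀ p : R × S, J p = (φ (JS p.2) (JR p.1), JS p.2))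
    (hφJS : ∀ t, LeftInverse (φ t) (φ (JS t))) (hcomm : ∀ s x, φ s (JR x) = JR (φ s x)) :
    Semiconj Prod.fst ⇑(J ^ (2 : ℤ)) ⇑(JR ^ (2 : ℤ)) := fun p => by
  simp only [zpow_two, Perm.mul_apply, hJ, hcomm, rightInverse_action_JS hφJS _ _]

variable [Mul S]

theorem leftInverse_action_JS
    (hφ : ∀ (s s' : S) (r : R),
      φ ((JS ^ m) (s * s')) (φ ((JS ^ (m + 1)) s) r) = φ ((JS ^ m) s') r)
    (hδS : ∀ s, s * δS = s) (hJSδ : JS δS = δS) (hφδ : ∀ r, φ δS r = r) (t : S) :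
    LeftInverse (φ t) (φ (JS t)) := by
  intro r
  have h := hφ ((JS ^ m).symm t) δS r
  rwa [hδS, Perm.zpow_add_one_apply, apply_symm_apply,
    Perm.zpow_apply_eq_self_of_apply_eq_self hJSδ, hφδ] at h

variable [Mul R]

def semidirectMul (φ : S → R → R) (p q : R × S) : R × S :=
  (p.1 * φ p.2 q.1, p.2 * q.2)

theorem HasMInverseProperty.fst_of_semidirectMul
    (hJ : ∀ p : R × S, J p = (φ (JS p.2) (JR p.1), JS p.2)) (hJSδ : JS δS = δS)
    (hφδ : ∀ r, φ δS r = r) (hδS : δS * δS = δS) (h : HasMInverseProperty (semidirectMul φ) J m) :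
    HasMInverseProperty (· * ·) JR m := by
  intro x y
  have := h (x, δS) (y, δS)
  simp only [semidirectMul, zpow_apply_mk_right_unit hJ hJSδ hφδ, hφδ, hδS] at this
  exact congrArg Prod.fst this

theorem fst_zpow_apply_mk_action (h : HasMInverseProperty (semidirectMul φ) J m)
    (hJ : ∀ p : R × S, J p = (φ (JS p.2) (JR p.1), JS p.2)) (hJRδ : JR δR = δR)
    (hJSδ : JS δS = δS) (hφδ : ∀ r, φ δS r = r) (hφδ' : ∀ s, φ s δR = δR)
    (hδR : ∀ r, δR * r = r ∧ r * δR = r) (hδS : ∀ s, s * δS = s) (s : S) (r : R) :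
    ((J ^ m) (φ s r, s)).1 = (JR ^ m) r := by
  have := congrArg Prod.fst (h (δR, s) (r, δS))
  simp only [semidirectMul, zpow_apply_mk_right_unit hJ hJSδ hφδ,
    zpow_apply_mk_left_unit hJ hJRδ hφδ', hφδ', hδR, hδS] at this
  exact this

theorem fst_zpow_apply_mk_mul_action (h : HasMInverseProperty (semidirectMul φ) J m)
    (hJ : ∀ p : R × S, J p = (φ (JS p.2) (JR p.1), JS p.2)) (hJSδ : JS δS = δS)
    (hφδ : ∀ r, φ δS r = r) (hδS : ∀ s, s * δS = s) (hφJS : ∀ t, LeftInverse (φ t) (φ (JS t)))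
    (s : S) (r r' : R) :
    ((J ^ m) (r * φ s r', s)).1 * JR ((J ^ m) (r, s)).1 = (JR ^ m) r' := by
  have := congrArg Prod.fst (h (r, s) (r', δS))
  simp only [semidirectMul, Perm.zpow_add_one_apply, hJ ((J ^ m) (r, s)),
    zpow_apply_snd_of_semidirect hJ, zpow_apply_mk_right_unit hJ hJSδ hφδ, hδS, hφJS _ _] at this
  exact this

end SemidirectProduct

theorem stmt_12_general {R S : Type*} [Mul R] [Mul S] (δR : R) (δS : S)
    (hqR₁ : ∀ a b : R, ∃! x : R, a * x = b)
    (hqR₂ : ∀ a b : R, ∃! y : R, y * a = b)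
    (hδR : ∀ r : R, δR * r = r ∧ r * δR = r)
    (hδS : ∀ s : S, δS * s = s ∧ s * δS = s)
    (JR : Equiv.Perm R) (JS : Equiv.Perm S)
    (hJRδ : JR δR = δR) (hJSδ : JS δS = δS)
    (hinvR : ∀ r : R, r * JR r = δR)
    (m : ℤ)
    (φ : S → R → R)
    (hφδ : ∀ r : R, φ δS r = r) (hφδ' : ∀ s : S, φ s δR = δR)
    (hφ1 : ∀ (s s' : S) (r : R),
      φ ((JS ^ m) (s * s')) (φ ((JS ^ (m + 1)) s) r) = φ ((JS ^ m) s') r)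
    (mul : R × S → R × S → R × S)
    (hmul : ∀ p q : R × S, mul p q = (p.1 * φ p.2 q.1, p.2 * q.2))
    (J : Equiv.Perm (R × S))
    (hJ : ∀ p : R × S, J p = (φ (JS p.2) (JR p.1), JS p.2))
    (heven : Even m)
    (hminv : ∀ p q : R × S, mul ((J ^ m) (mul p q)) ((J ^ (m + 1)) p) = (J ^ m) q) :
    ∀ (s : S) (r : R), φ s r = r := by
  obtain rfl : mul = semidirectMul φ := funext fun p => funext (hmul p)
  replace hminv : HasMInverseProperty (semidirectMul φ) J m := hminv
  have : IsLeftCancelMul R := ⟨fun a x y h => (hqR₁ a (a * y)).unique h rfl⟩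
  have : IsRightCancelMul R := ⟨fun a x y h => (hqR₂ a (y * a)).unique h rfl⟩
  have hδS' : ∀ s, s * δS = s := fun s => (hδS s).2
  have hφJS := leftInverse_action_JS hφ1 hδS' hJSδ hφδ
  have hφ_mul : ∀ s a b, φ s (a * b) = φ s a * φ s b := fun s =>
    map_mul_of_hasMInverseProperty (ψ := fun r => ((J ^ m) (r, s)).1)
      (hminv.fst_of_semidirectMul hJ hJSδ hφδ (hδS' δS)) (fun r => ⟨_, hφJS s r⟩)
      (fst_zpow_apply_mk_action hminv hJ hJRδ hJSδ hφδ hφδ' hδR hδS' s)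
      (fst_zpow_apply_mk_mul_action hminv hJ hJSδ hφδ hδS' hφJS s)
  have hφ_JR : ∀ s x, φ s (JR x) = JR (φ s x) := fun s =>
    map_JR_of_map_mul hinvR (hφ_mul s) (hφδ' s)
  obtain ⟨n, rfl⟩ := heven
  intro s r
  apply (JR ^ (n + n)).injective
  rw [← fst_zpow_apply_mk_action hminv hJ hJRδ hJSδ hφδ hφδ' hδR hδS' s r, ← two_mul, zpow_mul,
    zpow_mul]
  exact ((semiconj_fst_sq_of_semidirect hJ hφJS hφ_JR).perm_zpow n (φ s r, s)).symm

theorem stmt_12 {R S : Type*} [Mul R] [Mul S] (δR : R) (δS : S)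
    (hqR₁ : ∀ a b : R, ∃! x : R, a * x = b)
    (hqR₂ : ∀ a b : R, ∃! y : R, y * a = b)
    (hqS₁ : ∀ a b : S, ∃! x : S, a * x = b)
    (hqS₂ : ∀ a b : S, ∃! y : S, y * a = b)
    (hδR : ∀ r : R, δR * r = r ∧ r * δR = r)
    (hδS : ∀ s : S, δS * s = s ∧ s * δS = s)
    (JR : Equiv.Perm R) (JS : Equiv.Perm S)
    (hJRδ : JR δR = δR) (hJSδ : JS δS = δS)
    (hinvR : ∀ r : R, r * JR r = δR) (hinvS : ∀ s : S, s * JS s = δS)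
    (m₁ m₂ h₁ h₂ m : ℤ)
    (hmR : ∀ x y : R, (JR ^ m₁) (x * y) * (JR ^ (m₁ + 1)) x = (JR ^ m₁) y)
    (hmS : ∀ x y : S, (JS ^ m₂) (x * y) * (JS ^ (m₂ + 1)) x = (JS ^ m₂) y)
    (haR : ∀ x y : R, (JR ^ h₁) (x * y) = (JR ^ h₁) x * (JR ^ h₁) y)
    (haS : ∀ x y : S, (JS ^ h₂) (x * y) = (JS ^ h₂) x * (JS ^ h₂) y)
    (hc₁ : m ≡ m₁ [ZMOD h₁]) (hc₂ : m ≡ m₂ [ZMOD h₂])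
    (φ : S → R → R)
    (hφδ : ∀ r : R, φ δS r = r) (hφδ' : ∀ s : S, φ s δR = δR)
    (hφ1 : ∀ (s s' : S) (r : R),
      φ ((JS ^ m) (s * s')) (φ ((JS ^ (m + 1)) s) r) = φ ((JS ^ m) s') r)
    (hφ2 : ∀ (s : S) (r r' : R),
      φ s ((JR ^ m) (r * r')) * φ s ((JR ^ (m + 1)) r) = φ s ((JR ^ m) r'))
    (mul : R × S → R × S → R × S)
    (hmul : ∀ p q : R × S, mul p q = (p.1 * φ p.2 q.1, p.2 * q.2))
    (J : Equiv.Perm (R × S))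
    (hJ : ∀ p : R × S, J p = (φ (JS p.2) (JR p.1), JS p.2))
    (heven : Even m)
    (hminv : ∀ p q : R × S, mul ((J ^ m) (mul p q)) ((J ^ (m + 1)) p) = (J ^ m) q) :
    ∀ (s : S) (r : R), φ s r = r :=
  stmt_12_general δR δS hqR₁ hqR₂ hδR hδS JR JS hJRδ hJSδ hinvR m φ hφδ hφδ' hφ1 mul hmul J hJ heven
    hminv
end

section
/- Let (R,δ,J_R) and (S,δ,J_S) be loops with permutations fixing δ, satisfying xJ(x)=δ. Suppose φ: S×R → R and ψ: S×R → S satisfy φ(δ,r)=r, φ(s,δ)=δ, ψ(δ,r)=δ, ψ(s,δ)=s, φ(s,φ(J_S(s),r)) = r, and ψ(s,φ(J_S(s),r))·ψ(J_S(s),r) = δ for all r ∈ R, s ∈ S. Then in the product R×S with multiplication (r,s)(r',s') = (r·φ(s,r'), ψ(s,r')·s') and J(r,s) = (φ(J_S(s),J_R(r)), ψ(J_S(s),J_R(r))), every element satisfies (r,s)·J(r,s) = (δ,δ). -/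
theorem stmt_13 {R S : Type*} [Mul R] [Mul S] (δR : R) (δS : S)
    (hqR₁ : ∀ a b : R, ∃! x : R, a * x = b)
    (hqR₂ : ∀ a b : R, ∃! y : R, y * a = b)
    (hqS₁ : ∀ a b : S, ∃! x : S, a * x = b)
    (hqS₂ : ∀ a b : S, ∃! y : S, y * a = b)
    (hδR : ∀ r : R, δR * r = r ∧ r * δR = r)
    (hδS : ∀ s : S, δS * s = s ∧ s * δS = s)
    (JR : R → R) (JS : S → S)
    (hJRb : Function.Bijective JR) (hJSb : Function.Bijective JS)
    (hJRδ : JR δR = δR) (hJSδ : JS δS = δS)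
    (hinvR : ∀ r : R, r * JR r = δR) (hinvS : ∀ s : S, s * JS s = δS)
    (φ : S → R → R) (ψ : S → R → S)
    (hφδ : ∀ r : R, φ δS r = r) (hφδ' : ∀ s : S, φ s δR = δR)
    (hψδ : ∀ r : R, ψ δS r = δS) (hψδ' : ∀ s : S, ψ s δR = s)
    (h1 : ∀ (s : S) (r : R), φ s (φ (JS s) r) = r)
    (h2 : ∀ (s : S) (r : R), ψ s (φ (JS s) r) * ψ (JS s) r = δS) :
    let mul : R × S → R × S → R × S :=
      fun p q => (p.1 * φ p.2 q.1, ψ p.2 q.1 * q.2)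
    let J : R × S → R × S :=
      fun p => (φ (JS p.2) (JR p.1), ψ (JS p.2) (JR p.1))
    ∀ p : R × S, mul p (J p) = (δR, δS) := by
  intro mul J p
  simp only [mul, J, h1, h2, hinvR]
end

section
/- Let (R,δ,J_R) and (S,δ,J_S) be loops with permutations as above, φ: S×R → R, ψ: S×R → S with the matched pair conditions including φ(s,J_R^m(rr'))·φ(ψ(s,J_R^m(rr')), J_R^{m+1}(r)) = φ(s,J_R^m(r')) for m = 0 in particular. Then J_R(φ(s,r)) = φ(ψ(s,r), J_R(r)) for all r ∈ R, s ∈ S. -/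
theorem stmt_14 {R S : Type*} [Mul R] (δR : R) (δS : S)
    (hqR₁ : ∀ a b : R, ∃! x : R, a * x = b)
    (hqR₂ : ∀ a b : R, ∃! y : R, y * a = b)
    (hδR : ∀ r : R, δR * r = r ∧ r * δR = r)
    (JR : R → R) (hJRb : Function.Bijective JR)
    (hJRδ : JR δR = δR)
    (hinvR : ∀ r : R, r * JR r = δR)
    (φ : S → R → R) (ψ : S → R → S)
    (hφδ : ∀ r : R, φ δS r = r) (hφδ' : ∀ s : S, φ s δR = δR)
    (hψδ : ∀ r : R, ψ δS r = δS) (hψδ' : ∀ s : S, ψ s δR = s)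
    (hcomp : ∀ (s : S) (r r' : R),
      φ s (r * r') * φ (ψ s (r * r')) (JR r) = φ s r') :
    ∀ (s : S) (r : R), JR (φ s r) = φ (ψ s r) (JR r) := by
  intro s r
  have h := hcomp s r δR
  rw [(hδR r).2, hφδ'] at h
  exact ((hqR₁ (φ s r) δR).unique (hinvR (φ s r)) h)
end

section
/- Let H be an m-inverse property Hopf quasigroup with antipode S such that S^r is a Hopf quasigroup automorphism, i.e., S^r(hg) = S^r(h)S^r(g) and Δ(S^r(h)) = S^r(h₍₁₎)⊗S^r(h₍₂₎) for all h,g. Then H is an (m+ur)-inverse property Hopf quasigroup for every integer u; that is, S^{m+ur}(h₍₂₎g)·S^{m+1+ur}(h₍₁₎) = ε(h)S^{m+ur}(g). -/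
/-!
Write `T = S^{ur} = (S^r)^u`. Being an integer power of the Hopf quasigroup automorphism `S^r`,
`T` is again multiplicative and comultiplicative, and `ε ∘ T = ε` because `ε ∘ S = ε`.
Substituting `T h` and `T g` into the `m`-inverse property and pulling `T` out of
`(T h)₍₂₎ (T g) ⊗ (T h)₍₁₎ = T (h₍₂₎ g) ⊗ T h₍₁₎` yields the `(m + ur)`-inverse
property.
-/

open TensorProduct

section Intertwining

variable {k X Y : Type*} [CommRing k] [AddCommGroup X] [Module k X] [AddCommGroup Y] [Module k Y]

def intertwiningSubgroup (L : X →ₗ[k] Y) : Subgroup ((X ≃ₗ[k] X) × (Y ≃ₗ[k] Y)) where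
  carrier := {p | ∀ x, L (p.1 x) = p.2 (L x)}
  mul_mem' {p q} hp hq x := by
    change L (p.1 (q.1 x)) = p.2 (q.2 (L x))
    rw [hp, hq]
  one_mem' _ := rfl
  inv_mem' {p} hp x := by
    change L (p.1.symm x) = p.2.symm (L x)
    rw [LinearEquiv.eq_symm_apply, ← hp, LinearEquiv.apply_symm_apply]

theorem map_zpow_apply_of_intertwining (L : X →ₗ[k] Y) {f : X ≃ₗ[k] X} {g : Y ≃ₗ[k] Y}
    (hfg : ∀ x, L (f x) = g (L x)) (n : ℤ) (x : X) : L ((f ^ n) x) = (g ^ n) (L x) :=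
  (intertwiningSubgroup L).zpow_mem (x := (f, g)) hfg n x

end Intertwining

section Equivariance

variable {k H : Type*} [CommRing k] [AddCommGroup H] [Module k H]

theorem zpow_apply_mul_of_apply_mul (μ : H ⊗[k] H →ₗ[k] H) {T : H ≃ₗ[k] H}
    (hT : ∀ x y : H, T (μ (x ⊗ₜ[k] y)) = μ (T x ⊗ₜ[k] T y)) (n : ℤ) (x y : H) :
    (T ^ n) (μ (x ⊗ₜ[k] y)) = μ ((T ^ n) x ⊗ₜ[k] (T ^ n) y) := by
  have hμ : μ ∘ₗ (congr T T).toLinearMap = T.toLinearMap ∘ₗ μ :=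
    TensorProduct.ext' fun x y => (hT x y).symm
  have := map_zpow_apply_of_intertwining μ (LinearMap.congr_fun hμ) n (x ⊗ₜ[k] y)
  rw [congr_zpow, congr_tmul] at this
  exact this.symm

theorem comul_zpow_apply_of_comul_apply (Δ : H →ₗ[k] H ⊗[k] H) {T : H ≃ₗ[k] H}
    (hT : ∀ x : H, Δ (T x) = map T.toLinearMap T.toLinearMap (Δ x)) (n : ℤ) (x : H) :
    Δ ((T ^ n) x) = map (T ^ n).toLinearMap (T ^ n).toLinearMap (Δ x) := by
  rw [map_zpow_apply_of_intertwining Δ (g := congr T T) hT n x, congr_zpow]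
  rfl

theorem counit_zpow_apply_of_counit_apply (ε : H →ₗ[k] k) {T : H ≃ₗ[k] H}
    (hT : ∀ x : H, ε (T x) = ε x) (n : ℤ) (x : H) : ε ((T ^ n) x) = ε x := by
  rw [map_zpow_apply_of_intertwining ε (g := 1) hT n x, one_zpow]
  rfl

/-- `h ⊗ g ↦ (h₍₂₎ ⊗ g) ⊗ h₍₁₎` commutes with a comultiplicative `T`. -/
theorem comm_assoc_map_comul_tmul_apply (Δ : H →ₗ[k] H ⊗[k] H) {T : H ≃ₗ[k] H}
    (hT : ∀ x : H, Δ (T x) = map T.toLinearMap T.toLinearMap (Δ x)) (h g : H) :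
    TensorProduct.comm k H (H ⊗[k] H)
        (TensorProduct.assoc k H H H (map Δ LinearMap.id (T h ⊗ₜ[k] T g))) =
      map (map T.toLinearMap T.toLinearMap) T.toLinearMap
        (TensorProduct.comm k H (H ⊗[k] H)
          (TensorProduct.assoc k H H H (map Δ LinearMap.id (h ⊗ₜ[k] g)))) := by
  simp only [map_tmul, LinearMap.id_coe, id_eq, hT]
  induction Δ h using TensorProduct.induction_on with
  | zero => simp
  | tmul a b => rfl
  | add s t hs ht => simp only [map_add, add_tmul, hs, ht]

theorem map_comp_mul_map_map_apply (μ : H ⊗[k] H →ₗ[k] H) (A B : H →ₗ[k] H) {T : H ≃ₗ[k] H}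
    (hT : ∀ x y : H, T (μ (x ⊗ₜ[k] y)) = μ (T x ⊗ₜ[k] T y)) (t : (H ⊗[k] H) ⊗[k] H) :
    map (A ∘ₗ μ) B (map (map T.toLinearMap T.toLinearMap) T.toLinearMap t) =
      map (A ∘ₗ T.toLinearMap ∘ₗ μ) (B ∘ₗ T.toLinearMap) t := by
  have hμ : μ ∘ₗ map T.toLinearMap T.toLinearMap = T.toLinearMap ∘ₗ μ :=
    TensorProduct.ext' fun x y => (hT x y).symm
  rw [← LinearMap.comp_apply, ← TensorProduct.map_comp, LinearMap.comp_assoc, hμ]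

end Equivariance

theorem stmt_17_general {k : Type*} [CommRing k] {H : Type*} [AddCommGroup H] [Module k H]
    (μ : H ⊗[k] H →ₗ[k] H)
    (Δ : H →ₗ[k] H ⊗[k] H) (ε : H →ₗ[k] k) (S : H ≃ₗ[k] H)
    -- S is a coalgebra anti-automorphism
    (h_S_counit : ∀ h : H, ε (S h) = ε h)
    (m r : ℤ)
    -- m-inverse property:  S^m(h₍₂₎ g) S^{m+1}(h₍₁₎) = ε(h) S^m(g)
    (h_m_inv : ∀ h g : H,
      μ ((TensorProduct.map ((S ^ m).toLinearMap ∘ₗ μ) (S ^ (m + 1)).toLinearMap)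
        ((TensorProduct.comm k H (H ⊗[k] H))
          ((TensorProduct.assoc k H H H)
            ((TensorProduct.map Δ LinearMap.id) (h ⊗ₜ[k] g))))) = ε h • (S ^ m) g)
    -- S^r is a Hopf quasigroup automorphism
    (h_Sr_mul : ∀ h g : H, (S ^ r) (μ (h ⊗ₜ[k] g)) = μ ((S ^ r) h ⊗ₜ[k] (S ^ r) g))
    (h_Sr_comul : ∀ h : H,
      Δ ((S ^ r) h) = (TensorProduct.map (S ^ r).toLinearMap (S ^ r).toLinearMap) (Δ h)) :
    ∀ u : ℤ, ∀ h g : H,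
      μ ((TensorProduct.map ((S ^ (m + u * r)).toLinearMap ∘ₗ μ) (S ^ (m + 1 + u * r)).toLinearMap)
        ((TensorProduct.comm k H (H ⊗[k] H))
          ((TensorProduct.assoc k H H H)
            ((TensorProduct.map Δ LinearMap.id) (h ⊗ₜ[k] g))))) = ε h • (S ^ (m + u * r)) g := by
  intro u h g
  have hT : S ^ (u * r) = (S ^ r) ^ u := by rw [mul_comm, zpow_mul]
  have hT_mul := hT ▸ zpow_apply_mul_of_apply_mul μ h_Sr_mul u
  have hT_comul := hT ▸ comul_zpow_apply_of_comul_apply Δ h_Sr_comul u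
  calc _ = μ (map ((S ^ m).toLinearMap ∘ₗ (S ^ (u * r)).toLinearMap ∘ₗ μ)
          ((S ^ (m + 1)).toLinearMap ∘ₗ (S ^ (u * r)).toLinearMap)
          (TensorProduct.comm k H (H ⊗[k] H)
            (TensorProduct.assoc k H H H (map Δ LinearMap.id (h ⊗ₜ[k] g))))) := by
        rw [zpow_add, zpow_add S (m + 1)]
        rfl
    _ = ε ((S ^ (u * r)) h) • (S ^ m) ((S ^ (u * r)) g) := by
        rw [← h_m_inv, comm_assoc_map_comul_tmul_apply Δ hT_comul,
          map_comp_mul_map_map_apply μ _ _ hT_mul]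
    _ = ε h • (S ^ (m + u * r)) g := by
        rw [counit_zpow_apply_of_counit_apply ε h_S_counit, zpow_add]
        rfl

theorem stmt_17 {k : Type*} [CommRing k] {H : Type*} [AddCommGroup H] [Module k H]
    (μ : H ⊗[k] H →ₗ[k] H) (one : H)
    (Δ : H →ₗ[k] H ⊗[k] H) (ε : H →ₗ[k] k) (S : H ≃ₗ[k] H)
    -- unital (not necessarily associative) algebra
    (h_unit_l : ∀ h : H, μ (one ⊗ₜ[k] h) = h)
    (h_unit_r : ∀ h : H, μ (h ⊗ₜ[k] one) = h)
    -- coassociative counital coalgebra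
    (h_coassoc : (TensorProduct.assoc k H H H).toLinearMap ∘ₗ
        (TensorProduct.map Δ LinearMap.id) ∘ₗ Δ = (TensorProduct.map LinearMap.id Δ) ∘ₗ Δ)
    (h_counit_l : ∀ h : H, (TensorProduct.lid k H) ((TensorProduct.map ε LinearMap.id) (Δ h)) = h)
    (h_counit_r : ∀ h : H, (TensorProduct.rid k H) ((TensorProduct.map LinearMap.id ε) (Δ h)) = h)
    -- Δ and ε are multiplicative
    (h_comul_mul : Δ ∘ₗ μ = (TensorProduct.map μ μ) ∘ₗ
        (TensorProduct.tensorTensorTensorComm k H H H H).toLinearMap ∘ₗ (TensorProduct.map Δ Δ))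
    (h_counit_mul : ε ∘ₗ μ = (TensorProduct.lid k k).toLinearMap ∘ₗ (TensorProduct.map ε ε))
    (h_comul_one : Δ one = one ⊗ₜ[k] one) (h_counit_one : ε one = 1)
    -- S is a coalgebra anti-automorphism
    (h_S_comul : Δ ∘ₗ S.toLinearMap = (TensorProduct.comm k H H).toLinearMap ∘ₗ
        (TensorProduct.map S.toLinearMap S.toLinearMap) ∘ₗ Δ)
    (h_S_counit : ∀ h : H, ε (S h) = ε h)
    -- antipode property:  h₍₁₎ S(h₍₂₎) = ε(h) 1 = S(h₍₁₎) h₍₂₎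
    (h_S_l : ∀ h : H, μ ((TensorProduct.map LinearMap.id S.toLinearMap) (Δ h)) = ε h • one)
    (h_S_r : ∀ h : H, μ ((TensorProduct.map S.toLinearMap LinearMap.id) (Δ h)) = ε h • one)
    (m r : ℤ)
    -- m-inverse property:  S^m(h₍₂₎ g) S^{m+1}(h₍₁₎) = ε(h) S^m(g)
    (h_m_inv : ∀ h g : H,
      μ ((TensorProduct.map ((S ^ m).toLinearMap ∘ₗ μ) (S ^ (m + 1)).toLinearMap)
        ((TensorProduct.comm k H (H ⊗[k] H))
          ((TensorProduct.assoc k H H H)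
            ((TensorProduct.map Δ LinearMap.id) (h ⊗ₜ[k] g))))) = ε h • (S ^ m) g)
    -- S^r is a Hopf quasigroup automorphism
    (h_Sr_mul : ∀ h g : H, (S ^ r) (μ (h ⊗ₜ[k] g)) = μ ((S ^ r) h ⊗ₜ[k] (S ^ r) g))
    (h_Sr_comul : ∀ h : H,
      Δ ((S ^ r) h) = (TensorProduct.map (S ^ r).toLinearMap (S ^ r).toLinearMap) (Δ h)) :
    ∀ u : ℤ, ∀ h g : H,
      μ ((TensorProduct.map ((S ^ (m + u * r)).toLinearMap ∘ₗ μ) (S ^ (m + 1 + u * r)).toLinearMap)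
        ((TensorProduct.comm k H (H ⊗[k] H))
          ((TensorProduct.assoc k H H H)
            ((TensorProduct.map Δ LinearMap.id) (h ⊗ₜ[k] g))))) = ε h • (S ^ (m + u * r)) g :=
  stmt_17_general μ Δ ε S h_S_counit m r h_m_inv h_Sr_mul h_Sr_comul
end

section
/- Let H₁ be an m₁-inverse Hopf quasigroup with S₁^{h₁} an automorphism, and H₂ an m₂-inverse Hopf quasigroup with S₂^{h₂} an automorphism. If m ∈ ℤ satisfies m ≡ m₁ (mod h₁) and m ≡ m₂ (mod h₂), then the tensor product H₁⊗H₂ with componentwise (tensor) algebra and coalgebra structure and antipode S₁⊗S₂ is an m-inverse Hopf quasigroup: (S₁⊗S₂)^m((h₍₂₎⊗h'₍₂₎)(g⊗g'))·(S₁⊗S₂)^{m+1}(h₍₁₎⊗h'₍₁₎) = ε(h)ε(h')(S₁⊗S₂)^m(g⊗g'). -/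
/-!
Applying the multiplicative automorphism `S^h` to the `n`-inverse law yields the `(n + h)`-inverse
law. Multiplicative automorphisms form a subgroup, so `S^(h t)` is multiplicative for every
`t : ℤ`, and the law propagates from `m₁` to the whole class `m₁ + h₁ ℤ`, and likewise for `H₂`.
On `H₁ ⊗ H₂` the left-hand side of the law and the counit both factor into the two components,
so the law holds at every `m` at which it holds in both factors.
-/

open TensorProduct

section InverseLaw

variable {k : Type*} [CommRing k] {H : Type*} [AddCommGroup H] [Module k H]

def mulAutSubgroup (μ : H ⊗[k] H →ₗ[k] H) : Subgroup (H ≃ₗ[k] H) where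
  carrier := {φ | ∀ x y : H, φ (μ (x ⊗ₜ[k] y)) = μ (φ x ⊗ₜ[k] φ y)}
  mul_mem' {φ ψ} hφ hψ x y := by
    rw [LinearEquiv.mul_apply, hψ x y, hφ]; rfl
  one_mem' _ _ := rfl
  inv_mem' {φ} hφ x y := φ.injective <| by
    simp only [LinearEquiv.coe_inv, hφ _ _, φ.apply_symm_apply]

theorem comp_mul_eq_mul_map_of_mem_mulAutSubgroup {μ : H ⊗[k] H →ₗ[k] H} {φ : H ≃ₗ[k] H}
    (hφ : φ ∈ mulAutSubgroup μ) : φ.toLinearMap ∘ₗ μ = μ ∘ₗ map φ.toLinearMap φ.toLinearMap :=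
  TensorProduct.ext' hφ

/-- `(x ⊗ y) ⊗ z ↦ A (y z) · B x`, so that `inverseLawMap μ A B (Δ h ⊗ g) = A (h₍₂₎ g) B (h₍₁₎)`. -/
def inverseLawMap (μ : H ⊗[k] H →ₗ[k] H) (A B : H →ₗ[k] H) : (H ⊗[k] H) ⊗[k] H →ₗ[k] H :=
  μ ∘ₗ map (A ∘ₗ μ) B ∘ₗ (TensorProduct.comm k H (H ⊗[k] H)).toLinearMap ∘ₗ
    (TensorProduct.assoc k H H H).toLinearMap

def IsMInverse (μ : H ⊗[k] H →ₗ[k] H) (Δ : H →ₗ[k] H ⊗[k] H) (ε : H →ₗ[k] k)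
    (S : H ≃ₗ[k] H) (n : ℤ) : Prop :=
  ∀ x y : H, inverseLawMap μ (S ^ n).toLinearMap (S ^ (n + 1)).toLinearMap
    (map Δ LinearMap.id (x ⊗ₜ[k] y)) = ε x • (S ^ n) y

theorem isMInverse_iff {μ : H ⊗[k] H →ₗ[k] H} {Δ : H →ₗ[k] H ⊗[k] H} {ε : H →ₗ[k] k}
    {S : H ≃ₗ[k] H} {n : ℤ} :
    IsMInverse μ Δ ε S n ↔ inverseLawMap μ (S ^ n).toLinearMap (S ^ (n + 1)).toLinearMap ∘ₗ
      map Δ LinearMap.id = (TensorProduct.lid k H).toLinearMap ∘ₗ map ε (S ^ n).toLinearMap :=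
  ⟨fun h => TensorProduct.ext' fun x y => by simpa using h x y,
    fun h x y => by simpa using LinearMap.congr_fun h (x ⊗ₜ y)⟩

theorem inverseLawMap_comp_left {μ : H ⊗[k] H →ₗ[k] H} {φ : H ≃ₗ[k] H}
    (hφ : φ ∈ mulAutSubgroup μ) (A B : H →ₗ[k] H) :
    inverseLawMap μ (φ.toLinearMap ∘ₗ A) (φ.toLinearMap ∘ₗ B) =
      φ.toLinearMap ∘ₗ inverseLawMap μ A B := by
  simp only [inverseLawMap, LinearMap.comp_assoc μ A, map_comp, LinearMap.comp_assoc]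
  rw [← LinearMap.comp_assoc _ (map _ _) μ, ← comp_mul_eq_mul_map_of_mem_mulAutSubgroup hφ,
    LinearMap.comp_assoc]

theorem IsMInverse.add {μ : H ⊗[k] H →ₗ[k] H} {Δ : H →ₗ[k] H ⊗[k] H} {ε : H →ₗ[k] k}
    {S : H ≃ₗ[k] H} {n : ℤ} (hn : IsMInverse μ Δ ε S n) {h : ℤ}
    (hh : S ^ h ∈ mulAutSubgroup μ) : IsMInverse μ Δ ε S (n + h) := by
  have hpow : ∀ j, (S ^ (j + h)).toLinearMap = (S ^ h).toLinearMap ∘ₗ (S ^ j).toLinearMap :=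
    fun j => by rw [add_comm, zpow_add]; rfl
  intro x y
  rw [add_right_comm, hpow, hpow, inverseLawMap_comp_left hh, LinearMap.comp_apply, hn,
    map_smul, add_comm n h, zpow_add]
  rfl

theorem IsMInverse.of_modEq {μ : H ⊗[k] H →ₗ[k] H} {Δ : H →ₗ[k] H ⊗[k] H} {ε : H →ₗ[k] k}
    {S : H ≃ₗ[k] H} {n h m : ℤ} (hn : IsMInverse μ Δ ε S n) (hh : S ^ h ∈ mulAutSubgroup μ)
    (hm : m ≡ n [ZMOD h]) : IsMInverse μ Δ ε S m := by
  obtain ⟨t, ht⟩ := hm.symm.dvd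
  have hmul : S ^ (h * t) ∈ mulAutSubgroup μ := zpow_mul S h t ▸ zpow_mem hh t
  rw [show m = n + h * t by linear_combination ht]
  exact hn.add hmul

end InverseLaw

section Tensor

variable {k : Type*} [CommRing k] {H₁ : Type*} [AddCommGroup H₁] [Module k H₁]
  {H₂ : Type*} [AddCommGroup H₂] [Module k H₂]

def tensorMul (μ₁ : H₁ ⊗[k] H₁ →ₗ[k] H₁) (μ₂ : H₂ ⊗[k] H₂ →ₗ[k] H₂) :
    (H₁ ⊗[k] H₂) ⊗[k] (H₁ ⊗[k] H₂) →ₗ[k] H₁ ⊗[k] H₂ :=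
  map μ₁ μ₂ ∘ₗ (tensorTensorTensorComm k H₁ H₂ H₁ H₂).toLinearMap

def tensorComul (Δ₁ : H₁ →ₗ[k] H₁ ⊗[k] H₁) (Δ₂ : H₂ →ₗ[k] H₂ ⊗[k] H₂) :
    H₁ ⊗[k] H₂ →ₗ[k] (H₁ ⊗[k] H₂) ⊗[k] (H₁ ⊗[k] H₂) :=
  (tensorTensorTensorComm k H₁ H₁ H₂ H₂).toLinearMap ∘ₗ map Δ₁ Δ₂

def tensorCounit (ε₁ : H₁ →ₗ[k] k) (ε₂ : H₂ →ₗ[k] k) : H₁ ⊗[k] H₂ →ₗ[k] k :=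
  (TensorProduct.lid k k).toLinearMap ∘ₗ map ε₁ ε₂

theorem inverseLawMap_tensorMul (μ₁ : H₁ ⊗[k] H₁ →ₗ[k] H₁) (μ₂ : H₂ ⊗[k] H₂ →ₗ[k] H₂)
    (A₁ B₁ : H₁ →ₗ[k] H₁) (A₂ B₂ : H₂ →ₗ[k] H₂) :
    inverseLawMap (tensorMul μ₁ μ₂) (map A₁ A₂) (map B₁ B₂) ∘ₗ
        map (tensorTensorTensorComm k H₁ H₁ H₂ H₂).toLinearMap LinearMap.id =
      map (inverseLawMap μ₁ A₁ B₁) (inverseLawMap μ₂ A₂ B₂) ∘ₗ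
        (tensorTensorTensorComm k (H₁ ⊗[k] H₁) (H₂ ⊗[k] H₂) H₁ H₂).toLinearMap := by
  ext
  simp [inverseLawMap, tensorMul]

theorem IsMInverse.tensor {μ₁ : H₁ ⊗[k] H₁ →ₗ[k] H₁} {Δ₁ : H₁ →ₗ[k] H₁ ⊗[k] H₁}
    {ε₁ : H₁ →ₗ[k] k} {S₁ : H₁ ≃ₗ[k] H₁} {μ₂ : H₂ ⊗[k] H₂ →ₗ[k] H₂}
    {Δ₂ : H₂ →ₗ[k] H₂ ⊗[k] H₂} {ε₂ : H₂ →ₗ[k] k} {S₂ : H₂ ≃ₗ[k] H₂} {n : ℤ}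
    (h₁ : IsMInverse μ₁ Δ₁ ε₁ S₁ n) (h₂ : IsMInverse μ₂ Δ₂ ε₂ S₂ n) :
    IsMInverse (tensorMul μ₁ μ₂) (tensorComul Δ₁ Δ₂) (tensorCounit ε₁ ε₂)
      (TensorProduct.congr S₁ S₂) n := by
  rw [isMInverse_iff]
  ext a b c d
  have hfactor := LinearMap.congr_fun (inverseLawMap_tensorMul μ₁ μ₂ (S₁ ^ n).toLinearMap
    (S₁ ^ (n + 1)).toLinearMap (S₂ ^ n).toLinearMap (S₂ ^ (n + 1)).toLinearMap)
    ((Δ₁ a ⊗ₜ Δ₂ b) ⊗ₜ (c ⊗ₜ d))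
  have e₁ := h₁ a c
  have e₂ := h₂ b d
  simp only [LinearMap.comp_apply, map_tmul, LinearMap.id_apply, LinearEquiv.coe_coe,
    tensorTensorTensorComm_tmul] at hfactor e₁ e₂
  simp only [tensorComul, tensorCounit, congr_zpow, toLinearMap_congr,
    AlgebraTensorModule.curry_apply, LinearMap.restrictScalars_self, curry_apply,
    LinearMap.comp_apply, map_tmul, LinearEquiv.coe_coe, LinearMap.id_apply, lid_tmul, smul_eq_mul,
    hfactor, e₁, e₂, smul_tmul_smul]

end Tensor

theorem stmt_18_general {k : Type*} [CommRing k]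
    {H₁ : Type*} [AddCommGroup H₁] [Module k H₁]
    {H₂ : Type*} [AddCommGroup H₂] [Module k H₂]
    (μ₁ : H₁ ⊗[k] H₁ →ₗ[k] H₁)
    (Δ₁ : H₁ →ₗ[k] H₁ ⊗[k] H₁) (ε₁ : H₁ →ₗ[k] k) (S₁ : H₁ ≃ₗ[k] H₁)
    (μ₂ : H₂ ⊗[k] H₂ →ₗ[k] H₂)
    (Δ₂ : H₂ →ₗ[k] H₂ ⊗[k] H₂) (ε₂ : H₂ →ₗ[k] k) (S₂ : H₂ ≃ₗ[k] H₂)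
    (m₁ m₂ h₁ h₂ m : ℤ)
    -- H₁ is an m₁-inverse Hopf quasigroup
    (h1_m_inv : ∀ h g : H₁,
      μ₁ ((TensorProduct.map ((S₁ ^ m₁).toLinearMap ∘ₗ μ₁) (S₁ ^ (m₁ + 1)).toLinearMap)
        ((TensorProduct.comm k H₁ (H₁ ⊗[k] H₁))
          ((TensorProduct.assoc k H₁ H₁ H₁)
            ((TensorProduct.map Δ₁ LinearMap.id) (h ⊗ₜ[k] g))))) = ε₁ h • (S₁ ^ m₁) g)
    -- H₂ is an m₂-inverse Hopf quasigroup
    (h2_m_inv : ∀ h g : H₂,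
      μ₂ ((TensorProduct.map ((S₂ ^ m₂).toLinearMap ∘ₗ μ₂) (S₂ ^ (m₂ + 1)).toLinearMap)
        ((TensorProduct.comm k H₂ (H₂ ⊗[k] H₂))
          ((TensorProduct.assoc k H₂ H₂ H₂)
            ((TensorProduct.map Δ₂ LinearMap.id) (h ⊗ₜ[k] g))))) = ε₂ h • (S₂ ^ m₂) g)
    -- S₁^{h₁} and S₂^{h₂} are Hopf quasigroup automorphisms
    (hA₁_mul : ∀ h g : H₁, (S₁ ^ h₁) (μ₁ (h ⊗ₜ[k] g)) = μ₁ ((S₁ ^ h₁) h ⊗ₜ[k] (S₁ ^ h₁) g))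
    (hA₂_mul : ∀ h g : H₂, (S₂ ^ h₂) (μ₂ (h ⊗ₜ[k] g)) = μ₂ ((S₂ ^ h₂) h ⊗ₜ[k] (S₂ ^ h₂) g))
    -- the congruences  m ≡ m₁ (mod h₁),  m ≡ m₂ (mod h₂)
    (hc₁ : m ≡ m₁ [ZMOD h₁]) (hc₂ : m ≡ m₂ [ZMOD h₂]) :
    -- the tensor product is an m-inverse Hopf quasigroup
    let μt : ((H₁ ⊗[k] H₂) ⊗[k] (H₁ ⊗[k] H₂)) →ₗ[k] H₁ ⊗[k] H₂ :=
      (TensorProduct.map μ₁ μ₂) ∘ₗ (TensorProduct.tensorTensorTensorComm k H₁ H₂ H₁ H₂).toLinearMap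
    let Δt : (H₁ ⊗[k] H₂) →ₗ[k] ((H₁ ⊗[k] H₂) ⊗[k] (H₁ ⊗[k] H₂)) :=
      (TensorProduct.tensorTensorTensorComm k H₁ H₁ H₂ H₂).toLinearMap ∘ₗ
        (TensorProduct.map Δ₁ Δ₂)
    let εt : (H₁ ⊗[k] H₂) →ₗ[k] k :=
      (TensorProduct.lid k k).toLinearMap ∘ₗ (TensorProduct.map ε₁ ε₂)
    let St : (H₁ ⊗[k] H₂) ≃ₗ[k] (H₁ ⊗[k] H₂) := TensorProduct.congr S₁ S₂
    ∀ h g : H₁ ⊗[k] H₂,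
      μt ((TensorProduct.map ((St ^ m).toLinearMap ∘ₗ μt) (St ^ (m + 1)).toLinearMap)
        ((TensorProduct.comm k (H₁ ⊗[k] H₂) ((H₁ ⊗[k] H₂) ⊗[k] (H₁ ⊗[k] H₂)))
          ((TensorProduct.assoc k (H₁ ⊗[k] H₂) (H₁ ⊗[k] H₂) (H₁ ⊗[k] H₂))
            ((TensorProduct.map Δt LinearMap.id) (h ⊗ₜ[k] g))))) = εt h • (St ^ m) g := by
  intro μt Δt εt St
  exact IsMInverse.tensor (IsMInverse.of_modEq h1_m_inv hA₁_mul hc₁)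
    (IsMInverse.of_modEq h2_m_inv hA₂_mul hc₂)

theorem stmt_18 {k : Type*} [CommRing k]
    {H₁ : Type*} [AddCommGroup H₁] [Module k H₁]
    {H₂ : Type*} [AddCommGroup H₂] [Module k H₂]
    (μ₁ : H₁ ⊗[k] H₁ →ₗ[k] H₁) (one₁ : H₁)
    (Δ₁ : H₁ →ₗ[k] H₁ ⊗[k] H₁) (ε₁ : H₁ →ₗ[k] k) (S₁ : H₁ ≃ₗ[k] H₁)
    (μ₂ : H₂ ⊗[k] H₂ →ₗ[k] H₂) (one₂ : H₂)
    (Δ₂ : H₂ →ₗ[k] H₂ ⊗[k] H₂) (ε₂ : H₂ →ₗ[k] k) (S₂ : H₂ ≃ₗ[k] H₂)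
    (m₁ m₂ h₁ h₂ m : ℤ)
    -- H₁ is an m₁-inverse Hopf quasigroup
    (h1_unit : ∀ h : H₁, μ₁ (one₁ ⊗ₜ[k] h) = h ∧ μ₁ (h ⊗ₜ[k] one₁) = h)
    (h1_coassoc : (TensorProduct.assoc k H₁ H₁ H₁).toLinearMap ∘ₗ
        (TensorProduct.map Δ₁ LinearMap.id) ∘ₗ Δ₁ = (TensorProduct.map LinearMap.id Δ₁) ∘ₗ Δ₁)
    (h1_counit : ∀ h : H₁,
      (TensorProduct.lid k H₁) ((TensorProduct.map ε₁ LinearMap.id) (Δ₁ h)) = h ∧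
      (TensorProduct.rid k H₁) ((TensorProduct.map LinearMap.id ε₁) (Δ₁ h)) = h)
    (h1_comul_mul : Δ₁ ∘ₗ μ₁ = (TensorProduct.map μ₁ μ₁) ∘ₗ
        (TensorProduct.tensorTensorTensorComm k H₁ H₁ H₁ H₁).toLinearMap ∘ₗ
        (TensorProduct.map Δ₁ Δ₁))
    (h1_counit_mul : ε₁ ∘ₗ μ₁ = (TensorProduct.lid k k).toLinearMap ∘ₗ (TensorProduct.map ε₁ ε₁))
    (h1_comul_one : Δ₁ one₁ = one₁ ⊗ₜ[k] one₁) (h1_counit_one : ε₁ one₁ = 1)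
    (h1_S_comul : Δ₁ ∘ₗ S₁.toLinearMap = (TensorProduct.comm k H₁ H₁).toLinearMap ∘ₗ
        (TensorProduct.map S₁.toLinearMap S₁.toLinearMap) ∘ₗ Δ₁)
    (h1_S_counit : ∀ h : H₁, ε₁ (S₁ h) = ε₁ h)
    (h1_S : ∀ h : H₁,
      μ₁ ((TensorProduct.map LinearMap.id S₁.toLinearMap) (Δ₁ h)) = ε₁ h • one₁ ∧
      μ₁ ((TensorProduct.map S₁.toLinearMap LinearMap.id) (Δ₁ h)) = ε₁ h • one₁)
    (h1_m_inv : ∀ h g : H₁,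
      μ₁ ((TensorProduct.map ((S₁ ^ m₁).toLinearMap ∘ₗ μ₁) (S₁ ^ (m₁ + 1)).toLinearMap)
        ((TensorProduct.comm k H₁ (H₁ ⊗[k] H₁))
          ((TensorProduct.assoc k H₁ H₁ H₁)
            ((TensorProduct.map Δ₁ LinearMap.id) (h ⊗ₜ[k] g))))) = ε₁ h • (S₁ ^ m₁) g)
    -- H₂ is an m₂-inverse Hopf quasigroup
    (h2_unit : ∀ h : H₂, μ₂ (one₂ ⊗ₜ[k] h) = h ∧ μ₂ (h ⊗ₜ[k] one₂) = h)
    (h2_coassoc : (TensorProduct.assoc k H₂ H₂ H₂).toLinearMap ∘ₗ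
        (TensorProduct.map Δ₂ LinearMap.id) ∘ₗ Δ₂ = (TensorProduct.map LinearMap.id Δ₂) ∘ₗ Δ₂)
    (h2_counit : ∀ h : H₂,
      (TensorProduct.lid k H₂) ((TensorProduct.map ε₂ LinearMap.id) (Δ₂ h)) = h ∧
      (TensorProduct.rid k H₂) ((TensorProduct.map LinearMap.id ε₂) (Δ₂ h)) = h)
    (h2_comul_mul : Δ₂ ∘ₗ μ₂ = (TensorProduct.map μ₂ μ₂) ∘ₗ
        (TensorProduct.tensorTensorTensorComm k H₂ H₂ H₂ H₂).toLinearMap ∘ₗ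
        (TensorProduct.map Δ₂ Δ₂))
    (h2_counit_mul : ε₂ ∘ₗ μ₂ = (TensorProduct.lid k k).toLinearMap ∘ₗ (TensorProduct.map ε₂ ε₂))
    (h2_comul_one : Δ₂ one₂ = one₂ ⊗ₜ[k] one₂) (h2_counit_one : ε₂ one₂ = 1)
    (h2_S_comul : Δ₂ ∘ₗ S₂.toLinearMap = (TensorProduct.comm k H₂ H₂).toLinearMap ∘ₗ
        (TensorProduct.map S₂.toLinearMap S₂.toLinearMap) ∘ₗ Δ₂)
    (h2_S_counit : ∀ h : H₂, ε₂ (S₂ h) = ε₂ h)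
    (h2_S : ∀ h : H₂,
      μ₂ ((TensorProduct.map LinearMap.id S₂.toLinearMap) (Δ₂ h)) = ε₂ h • one₂ ∧
      μ₂ ((TensorProduct.map S₂.toLinearMap LinearMap.id) (Δ₂ h)) = ε₂ h • one₂)
    (h2_m_inv : ∀ h g : H₂,
      μ₂ ((TensorProduct.map ((S₂ ^ m₂).toLinearMap ∘ₗ μ₂) (S₂ ^ (m₂ + 1)).toLinearMap)
        ((TensorProduct.comm k H₂ (H₂ ⊗[k] H₂))
          ((TensorProduct.assoc k H₂ H₂ H₂)
            ((TensorProduct.map Δ₂ LinearMap.id) (h ⊗ₜ[k] g))))) = ε₂ h • (S₂ ^ m₂) g)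
    -- S₁^{h₁} and S₂^{h₂} are Hopf quasigroup automorphisms
    (hA₁_mul : ∀ h g : H₁, (S₁ ^ h₁) (μ₁ (h ⊗ₜ[k] g)) = μ₁ ((S₁ ^ h₁) h ⊗ₜ[k] (S₁ ^ h₁) g))
    (hA₁_comul : ∀ h : H₁,
      Δ₁ ((S₁ ^ h₁) h) = (TensorProduct.map (S₁ ^ h₁).toLinearMap (S₁ ^ h₁).toLinearMap) (Δ₁ h))
    (hA₂_mul : ∀ h g : H₂, (S₂ ^ h₂) (μ₂ (h ⊗ₜ[k] g)) = μ₂ ((S₂ ^ h₂) h ⊗ₜ[k] (S₂ ^ h₂) g))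
    (hA₂_comul : ∀ h : H₂,
      Δ₂ ((S₂ ^ h₂) h) = (TensorProduct.map (S₂ ^ h₂).toLinearMap (S₂ ^ h₂).toLinearMap) (Δ₂ h))
    -- the congruences  m ≡ m₁ (mod h₁),  m ≡ m₂ (mod h₂)
    (hc₁ : m ≡ m₁ [ZMOD h₁]) (hc₂ : m ≡ m₂ [ZMOD h₂]) :
    -- the tensor product is an m-inverse Hopf quasigroup
    let μt : ((H₁ ⊗[k] H₂) ⊗[k] (H₁ ⊗[k] H₂)) →ₗ[k] H₁ ⊗[k] H₂ :=
      (TensorProduct.map μ₁ μ₂) ∘ₗ (TensorProduct.tensorTensorTensorComm k H₁ H₂ H₁ H₂).toLinearMap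
    let Δt : (H₁ ⊗[k] H₂) →ₗ[k] ((H₁ ⊗[k] H₂) ⊗[k] (H₁ ⊗[k] H₂)) :=
      (TensorProduct.tensorTensorTensorComm k H₁ H₁ H₂ H₂).toLinearMap ∘ₗ
        (TensorProduct.map Δ₁ Δ₂)
    let εt : (H₁ ⊗[k] H₂) →ₗ[k] k :=
      (TensorProduct.lid k k).toLinearMap ∘ₗ (TensorProduct.map ε₁ ε₂)
    let St : (H₁ ⊗[k] H₂) ≃ₗ[k] (H₁ ⊗[k] H₂) := TensorProduct.congr S₁ S₂
    ∀ h g : H₁ ⊗[k] H₂,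
      μt ((TensorProduct.map ((St ^ m).toLinearMap ∘ₗ μt) (St ^ (m + 1)).toLinearMap)
        ((TensorProduct.comm k (H₁ ⊗[k] H₂) ((H₁ ⊗[k] H₂) ⊗[k] (H₁ ⊗[k] H₂)))
          ((TensorProduct.assoc k (H₁ ⊗[k] H₂) (H₁ ⊗[k] H₂) (H₁ ⊗[k] H₂))
            ((TensorProduct.map Δt LinearMap.id) (h ⊗ₜ[k] g))))) = εt h • (St ^ m) g :=
  stmt_18_general μ₁ Δ₁ ε₁ S₁ μ₂ Δ₂ ε₂ S₂ m₁ m₂ h₁ h₂ m h1_m_inv h2_m_inv hA₁_mul hA₂_mul hc₁ hc₂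
end
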